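/- Let G be a cycle of length n. Then for every positive integer k ≤ n, β_S^k(G) ≥ n − k − 1. -/

import Mathlib

open Finset

variable {V : Type*}

/-- Sum of `f` over all edges of `G`. -/
noncomputable def edgeSum (G : SimpleGraph V) (f : Sym2 V → ℤ) : ℤ :=
  ∑ᶠ e ∈ G.edgeSet, f e

/-- Sum of `f` over all edges of `G` incident with `v`, i.e. `f(E_G(v))`. -/
noncomputable def vertexSum (G : SimpleGraph V) (f : Sym2 V → ℤ) (v : V) : ℤ :=
  ∑ᶠ e ∈ {e ∈ G.edgeSet | v ∈ e}, f e

/-- `f` is a signed `k`-submatching of `G`: it takes values `±1` on edges and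
`f(E_G(v)) ≤ 1` for at least `k` vertices. -/
def IsSignedSubmatching (G : SimpleGraph V) (f : Sym2 V → ℤ) (k : ℕ) : Prop :=
  (∀ e ∈ G.edgeSet, f e = 1 ∨ f e = -1) ∧ k ≤ {v | vertexSum G f v ≤ 1}.ncard

/-- The signed `k`-submatching number `β_S^k(G)`. -/
noncomputable def betaS (G : SimpleGraph V) (k : ℕ) : ℤ :=
  sSup {s : ℤ | ∃ f, IsSignedSubmatching G f k ∧ s = edgeSum G f}

/-!
Put `-1` on the `⌈k/2⌉` alternate edges `{0,1}, {2,3}, …` of the cycle and `+1` on the others.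
Every vertex of the cycle has degree 2, so each of the vertices `0, …, k-1`, lying on a `-1` edge,
has `f(E(v)) ≤ 0`, while `f(E(C_n)) = n - 2⌈k/2⌉ ≥ n - k - 1`.
-/

open SimpleGraph

variable {G : SimpleGraph V} {f : Sym2 V → ℤ}

theorem edgeSum_eq_sum_edgeFinset [Fintype G.edgeSet] :
    edgeSum G f = ∑ e ∈ G.edgeFinset, f e := by
  rw [edgeSum, ← coe_edgeFinset, finsum_mem_coe_finset]

theorem vertexSum_eq_sum_incidenceFinset [DecidableEq V] (v : V) [Fintype (G.neighborSet v)] :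
    vertexSum G f v = ∑ e ∈ G.incidenceFinset v, f e := by
  rw [vertexSum, ← finsum_mem_coe_finset, coe_incidenceFinset]
  rfl

theorem edgeSum_le_card_edgeFinset [Fintype G.edgeSet] (hf : ∀ e ∈ G.edgeSet, f e ≤ 1) :
    edgeSum G f ≤ #G.edgeFinset := by
  rw [edgeSum_eq_sum_edgeFinset, ← nsmul_one, ← sum_const]
  exact sum_le_sum fun e he => hf e (mem_edgeFinset.mp he)

theorem IsSignedSubmatching.edgeSum_le_betaS [Fintype G.edgeSet] {k : ℕ}
    (hf : IsSignedSubmatching G f k) : edgeSum G f ≤ betaS G k := by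
  refine le_csSup ⟨#G.edgeFinset, ?_⟩ ⟨f, hf, rfl⟩
  rintro _ ⟨g, hg, rfl⟩
  exact edgeSum_le_card_edgeFinset fun e he => by rcases hg.1 e he with h | h <;> omega

theorem vertexSum_nonpos_of_degree_le_two [DecidableEq V] {v : V} [Fintype (G.neighborSet v)]
    (hdeg : G.degree v ≤ 2) (hf : ∀ e ∈ G.edgeSet, f e ≤ 1) {e : Sym2 V}
    (he : e ∈ G.incidenceSet v) (hfe : f e = -1) : vertexSum G f v ≤ 0 := by
  have he' : e ∈ G.incidenceFinset v := (G.mem_incidenceFinset v e).mpr he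
  have hrest : ∑ d ∈ (G.incidenceFinset v).erase e, f d ≤ 1 :=
    calc ∑ d ∈ (G.incidenceFinset v).erase e, f d
        ≤ #((G.incidenceFinset v).erase e) • (1 : ℤ) :=
          sum_le_card_nsmul _ _ _ fun d hd =>
            hf d ((G.mem_incidenceFinset v d).mp (mem_of_mem_erase hd)).1
      _ ≤ 1 := by
          rw [card_erase_of_mem he', card_incidenceFinset_eq_degree, nsmul_one]
          omega
  rw [vertexSum_eq_sum_incidenceFinset, ← add_sum_erase _ _ he', hfe]
  omega

section EdgeSign

variable [DecidableEq V]

def edgeSign (M : Finset (Sym2 V)) (e : Sym2 V) : ℤ :=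
  if e ∈ M then -1 else 1

theorem edgeSign_of_mem {M : Finset (Sym2 V)} {e : Sym2 V} (he : e ∈ M) : edgeSign M e = -1 :=
  if_pos he

theorem edgeSign_of_notMem {M : Finset (Sym2 V)} {e : Sym2 V} (he : e ∉ M) : edgeSign M e = 1 :=
  if_neg he

theorem edgeSign_eq_one_or_eq_neg_one (M : Finset (Sym2 V)) (e : Sym2 V) :
    edgeSign M e = 1 ∨ edgeSign M e = -1 := by
  by_cases he : e ∈ M
  exacts [Or.inr (edgeSign_of_mem he), Or.inl (edgeSign_of_notMem he)]

theorem edgeSign_le_one (M : Finset (Sym2 V)) (e : Sym2 V) : edgeSign M e ≤ 1 := by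
  rcases edgeSign_eq_one_or_eq_neg_one M e with h | h <;> omega

theorem edgeSum_edgeSign [Fintype G.edgeSet] {M : Finset (Sym2 V)}
    (hM : M ⊆ G.edgeFinset) : edgeSum G (edgeSign M) = #G.edgeFinset - 2 * #M := by
  have hneg : ∑ e ∈ M, edgeSign M e = -#M := by
    rw [sum_congr rfl fun e => edgeSign_of_mem]
    simp
  have hpos : ∑ e ∈ G.edgeFinset \ M, edgeSign M e = #(G.edgeFinset \ M) := by
    rw [sum_congr rfl fun e he => edgeSign_of_notMem (mem_sdiff.mp he).2]
    simp
  rw [edgeSum_eq_sum_edgeFinset, ← sum_sdiff hM, hneg, hpos, card_sdiff_of_subset hM,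
    Nat.cast_sub (card_le_card hM)]
  ring

end EdgeSign

section Cycle

open Fin.NatCast

variable {n m : ℕ}

theorem card_edgeFinset_cycleGraph : #(cycleGraph (n + 3)).edgeFinset = n + 3 := by
  have := (cycleGraph (n + 3)).sum_degrees_eq_twice_card_edges
  simp only [cycleGraph_degree_three_le, sum_const, card_univ, Fintype.card_fin,
    smul_eq_mul] at this
  omega

theorem cycleGraph_adj_add_one (a : Fin (n + 2)) : (cycleGraph (n + 2)).Adj a (a + 1) :=
  cycleGraph_adj.mpr (Or.inr (add_sub_cancel_left a 1))

def cycleAlternateEdges (n m : ℕ) : Finset (Sym2 (Fin (n + 3))) :=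
  (range m).image fun j => s(((2 * j : ℕ) : Fin (n + 3)), ((2 * j : ℕ) : Fin (n + 3)) + 1)

theorem cycleAlternateEdges_subset :
    cycleAlternateEdges n m ⊆ (cycleGraph (n + 3)).edgeFinset := by
  intro e he
  obtain ⟨j, -, rfl⟩ := mem_image.mp he
  exact mem_edgeFinset.mpr (cycleGraph_adj_add_one _)

theorem card_cycleAlternateEdges_le : #(cycleAlternateEdges n m) ≤ m :=
  card_image_le.trans (card_range m).le

theorem exists_mem_cycleAlternateEdges {v : Fin (n + 3)} (hv : v.val < 2 * m) :
    ∃ e ∈ cycleAlternateEdges n m, v ∈ e := by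
  refine ⟨_, mem_image_of_mem _ (mem_range.mpr (show v.val / 2 < m by omega)), ?_⟩
  rcases Nat.mod_two_eq_zero_or_one v.val with h | h
  · have : ((2 * (v.val / 2) : ℕ) : Fin (n + 3)) = v := by
      rw [show 2 * (v.val / 2) = v.val by omega, Fin.cast_val_eq_self]
    rw [this]
    exact Sym2.mem_mk_left _ _
  · have : ((2 * (v.val / 2) : ℕ) : Fin (n + 3)) + 1 = v := by
      rw [← Nat.cast_add_one, show 2 * (v.val / 2) + 1 = v.val by omega, Fin.cast_val_eq_self]
    rw [this]
    exact Sym2.mem_mk_right _ _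

theorem isSignedSubmatching_cycleGraph {k : ℕ} (hk : k ≤ n + 3) (hkm : k ≤ 2 * m) :
    IsSignedSubmatching (cycleGraph (n + 3)) (edgeSign (cycleAlternateEdges n m)) k := by
  refine ⟨fun e _ => edgeSign_eq_one_or_eq_neg_one _ e, ?_⟩
  have hcovered : {v : Fin (n + 3) | v.val < k} ⊆
      {v | vertexSum (cycleGraph (n + 3)) (edgeSign (cycleAlternateEdges n m)) v ≤ 1} := by
    intro v hv
    obtain ⟨e, he, hve⟩ := exists_mem_cycleAlternateEdges (m := m) (lt_of_lt_of_le hv hkm)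
    have hnonpos : vertexSum _ _ v ≤ 0 :=
      vertexSum_nonpos_of_degree_le_two cycleGraph_degree_three_le.le
        (fun d _ => edgeSign_le_one _ d)
        ⟨mem_edgeFinset.mp (cycleAlternateEdges_subset he), hve⟩ (edgeSign_of_mem he)
    exact hnonpos.trans zero_le_one
  calc k = {v : Fin (n + 3) | v.val < k}.ncard := by
        rw [← Fin.range_castLE hk, Set.ncard_range_of_injective (Fin.castLE_injective hk),
          Nat.card_eq_fintype_card, Fintype.card_fin]
    _ ≤ _ := Set.ncard_le_ncard hcovered

theorem sub_two_mul_le_edgeSum_cycleGraph :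
    (n + 3 : ℤ) - 2 * m ≤
      edgeSum (cycleGraph (n + 3)) (edgeSign (cycleAlternateEdges n m)) := by
  rw [edgeSum_edgeSign cycleAlternateEdges_subset, card_edgeFinset_cycleGraph]
  have : (#(cycleAlternateEdges n m) : ℤ) ≤ m := by exact_mod_cast card_cycleAlternateEdges_le
  push_cast
  omega

end Cycle

theorem cycleGraph_betaS_lower_bound_general (n : ℕ) (hn : 3 ≤ n)
    (k : ℕ) (hk : k ≤ n) :
    (n : ℤ) - k - 1 ≤ betaS (SimpleGraph.cycleGraph n) k := by
  obtain ⟨n, rfl⟩ : ∃ p, n = p + 3 := ⟨n - 3, by omega⟩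
  have hsub := isSignedSubmatching_cycleGraph (m := (k + 1) / 2) hk (by omega)
  calc ((n + 3 : ℕ) : ℤ) - k - 1 ≤ (n + 3 : ℤ) - 2 * ((k + 1) / 2 : ℕ) := by omega
    _ ≤ edgeSum _ _ := sub_two_mul_le_edgeSum_cycleGraph
    _ ≤ _ := hsub.edgeSum_le_betaS

theorem cycleGraph_betaS_lower_bound (n : ℕ) (hn : 3 ≤ n)
    (k : ℕ) (hk1 : 1 ≤ k) (hk : k ≤ n) :
    (n : ℤ) - k - 1 ≤ betaS (SimpleGraph.cycleGraph n) k :=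
  cycleGraph_betaS_lower_bound_general n hn k hk
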